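/- Let G be a labeled directed graph and H a connected component of G (as an induced subgraph with inherited labels). Then the span of the vertices of H and the labels occurring on edges of H is an ideal of Lie(G). -/

import Mathlib

/-- A finite simple directed graph with edge labels: `lab x y = some l` means there is a
directed edge from `x` to `y` carrying label `l`. Simplicity: no loops, and at most one
of the two directions between a pair of vertices carries an edge. -/
structure LabeledDigraph (V C : Type*) where
  lab : V → V → Option C
  no_loops : ∀ v, lab v v = none
  one_dir : ∀ x y, (lab x y).isSome → lab y x = none

/-- Adjacency in the underlying undirected graph. -/
def LabeledDigraph.adj {V C : Type*} (G : LabeledDigraph V C) (x y : V) : Prop :=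
  (G.lab x y).isSome ∨ (G.lab y x).isSome

/-- A Lie algebra `L` over `F` together with a basis `b` indexed by the vertices and the
labels realizes `Lie(G)` if the bracket of two vertices joined by an edge is the label of
that edge (with a sign given by the orientation, which follows from antisymmetry), the
bracket of non-adjacent vertices is zero, and all labels are central. -/
def IsGraphLieAlg {V C F L : Type*} [Field F] [LieRing L] [LieAlgebra F L]
    (G : LabeledDigraph V C) (b : Module.Basis (V ⊕ C) F L) : Prop :=
  (∀ (x y : V) (l : C), G.lab x y = some l →
      ⁅b (Sum.inl x), b (Sum.inl y)⁆ = b (Sum.inr l)) ∧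
  (∀ x y : V, G.lab x y = none → G.lab y x = none →
      ⁅b (Sum.inl x), b (Sum.inl y)⁆ = 0) ∧
  (∀ (l : C) (z : L), ⁅b (Sum.inr l), z⁆ = 0)

/-- The labels occurring on edges of the subgraph of `G` induced by the vertex set `V'`. -/
def labelsOn {V C : Type*} (G : LabeledDigraph V C) (V' : Set V) : Set C :=
  {l | ∃ x ∈ V', ∃ y ∈ V', G.lab x y = some l}

/-- The connected component (in the underlying undirected graph) of a vertex `v₀`. -/
def component {V C : Type*} (G : LabeledDigraph V C) (v₀ : V) : Set V :=
  {w | Relation.ReflTransGen G.adj v₀ w}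

/-!
Brackets are bilinear, so the span of a set `S` is an ideal as soon as the bracket of every basis
vector with every element of `S` lands in the span. Labels are central, and the bracket of any vertex
`u` with a vertex `w` of `H` is zero or `±` the label of an edge between them; such an edge makes `u`
adjacent to `w`, so `u` lies in `H` and its label is one of the labels of `H`.
-/

open Submodule

theorem Submodule.exists_lieSubmodule_coe_eq_span_of_forall_lie_mem {R L M : Type*} [CommRing R]
    [LieRing L] [LieAlgebra R L] [AddCommGroup M] [Module R M] [LieRingModule L M]
    [LieModule R L M] {T : Set L} (hT : span R T = ⊤) {S : Set M}
    (h : ∀ t ∈ T, ∀ s ∈ S, ⁅t, s⁆ ∈ span R S) :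
    ∃ N : LieSubmodule R L M, (N : Submodule R M) = span R S := by
  rw [exists_lieSubmodule_coe_eq_iff]
  intro x m hm
  have hx : x ∈ span R T := hT ▸ mem_top
  induction hx, hm using span_induction₂ with
  | mem_mem t s ht hs => exact h t ht s hs
  | zero_left => simp
  | zero_right => simp
  | add_left _ _ _ _ _ _ h₁ h₂ => rw [add_lie]; exact add_mem h₁ h₂
  | add_right _ _ _ _ _ _ h₁ h₂ => rw [lie_add]; exact add_mem h₁ h₂
  | smul_left r _ _ _ _ h => rw [smul_lie]; exact smul_mem _ r h
  | smul_right r _ _ _ _ h => rw [lie_smul]; exact smul_mem _ r h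

theorem mem_component_of_adj {V C : Type*} {G : LabeledDigraph V C} {v₀ u w : V}
    (hw : w ∈ component G v₀) (h : G.adj u w) : u ∈ component G v₀ :=
  Relation.ReflTransGen.tail hw h.symm

namespace IsGraphLieAlg

variable {V C F L : Type*} [Field F] [LieRing L] [LieAlgebra F L] {G : LabeledDigraph V C}
  {b : Module.Basis (V ⊕ C) F L}

theorem lie_inr_right (hb : IsGraphLieAlg G b) (x : L) (l : C) : ⁅x, b (Sum.inr l)⁆ = 0 := by
  rw [← lie_skew, hb.2.2, neg_zero]

theorem lie_inl_inl_mem_span_labelsOn (hb : IsGraphLieAlg G b) {V' : Set V}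
    (hV' : ∀ u w, G.adj u w → w ∈ V' → u ∈ V') (u : V) {w : V} (hw : w ∈ V') :
    ⁅b (Sum.inl u), b (Sum.inl w)⁆ ∈ span F ((b ∘ Sum.inr) '' labelsOn G V') := by
  obtain ⟨hedge, hnone, -⟩ := hb
  rcases huw : G.lab u w with _ | l
  · rcases hwu : G.lab w u with _ | l
    · rw [hnone u w huw hwu]
      exact zero_mem _
    · have hu : u ∈ V' := hV' u w (Or.inr (by simp [hwu])) hw
      rw [← lie_skew, hedge w u l hwu]
      exact neg_mem (subset_span ⟨l, ⟨w, hw, u, hu, hwu⟩, rfl⟩)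
  · have hu : u ∈ V' := hV' u w (Or.inl (by simp [huw])) hw
    rw [hedge u w l huw]
    exact subset_span ⟨l, ⟨u, hu, w, hw, huw⟩, rfl⟩

end IsGraphLieAlg

theorem stmt6_general {V C F L : Type*} [Field F] [LieRing L] [LieAlgebra F L]
    (G : LabeledDigraph V C)
    (b : Module.Basis (V ⊕ C) F L) (hb : IsGraphLieAlg G b) (v₀ : V) :
    ∃ I : LieIdeal F L, (I : Submodule F L) = Submodule.span F
        ((b ∘ Sum.inl) '' component G v₀ ∪ (b ∘ Sum.inr) '' labelsOn G (component G v₀)) := by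
  refine exists_lieSubmodule_coe_eq_span_of_forall_lie_mem b.span_eq ?_
  rintro _ ⟨i, rfl⟩ _ (⟨w, hw, rfl⟩ | ⟨l, -, rfl⟩)
  · rcases i with u | l
    · exact span_mono Set.subset_union_right <|
        hb.lie_inl_inl_mem_span_labelsOn (fun _ _ h hw ↦ mem_component_of_adj hw h) u hw
    · rw [hb.2.2]
      exact zero_mem _
  · rw [Function.comp_apply, hb.lie_inr_right]
    exact zero_mem _

/-- If `H` is a connected component of `G`, then the span of the vertices of `H` and the
labels occurring on edges of `H` is an ideal of `Lie(G)`. -/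
theorem stmt6 {V C F L : Type*} [Field F] [LieRing L] [LieAlgebra F L]
    (hchar : (2 : F) ≠ 0) (G : LabeledDigraph V C)
    (b : Module.Basis (V ⊕ C) F L) (hb : IsGraphLieAlg G b) (v₀ : V) :
    ∃ I : LieIdeal F L, (I : Submodule F L) = Submodule.span F
        ((b ∘ Sum.inl) '' component G v₀ ∪ (b ∘ Sum.inr) '' labelsOn G (component G v₀)) :=
  stmt6_general G b hb v₀
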